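/- arXiv:1308.3219 — 4 statements merged into one kernel-verified Lean document; each statement's English description precedes it below -/
import Mathlib

section
/- Nye's formula (first form): if A : ℝ³ → so(3) is a continuously differentiable skew-symmetric matrix field, then at every point −Curl A = (∇(axl A))ᵀ − tr((∇(axl A))ᵀ)·𝟙, where ∇(axl A) denotes the Jacobian matrix of the vector field axl A and 𝟙 is the 3×3 identity matrix. -/
open Matrix

/-- Partial derivative in direction `j` of a scalar field on `ℝ³`. -/
noncomputable def pd (j : Fin 3) (f : (Fin 3 → ℝ) → ℝ) (x : Fin 3 → ℝ) : ℝ :=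
  fderiv ℝ f x (Pi.single j 1)

/-- Gradient of a scalar field on `ℝ³`. -/
noncomputable def grad3 (f : (Fin 3 → ℝ) → ℝ) (x : Fin 3 → ℝ) : Fin 3 → ℝ :=
  fun i => pd i f x

/-- Classical curl of a vector field on `ℝ³`. -/
noncomputable def vcurl (v : (Fin 3 → ℝ) → Fin 3 → ℝ) (x : Fin 3 → ℝ) : Fin 3 → ℝ :=
  ![pd 1 (fun y => v y 2) x - pd 2 (fun y => v y 1) x,
    pd 2 (fun y => v y 0) x - pd 0 (fun y => v y 2) x,
    pd 0 (fun y => v y 1) x - pd 1 (fun y => v y 0) x]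

/-- Divergence of a vector field on `ℝ³`. -/
noncomputable def vdiv (v : (Fin 3 → ℝ) → Fin 3 → ℝ) (x : Fin 3 → ℝ) : ℝ :=
  ∑ i, pd i (fun y => v y i) x

/-- Row-wise Curl of a matrix field on `ℝ³`: the `i`-th row of `mCurl P`
is the curl of the `i`-th row of `P`. -/
noncomputable def mCurl (P : (Fin 3 → ℝ) → Matrix (Fin 3) (Fin 3) ℝ) (x : Fin 3 → ℝ) :
    Matrix (Fin 3) (Fin 3) ℝ :=
  Matrix.of fun i j => vcurl (fun y => P y i) x j

/-- Jacobian matrix of a vector field on `ℝ³`. -/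
noncomputable def jac (v : (Fin 3 → ℝ) → Fin 3 → ℝ) (x : Fin 3 → ℝ) :
    Matrix (Fin 3) (Fin 3) ℝ :=
  Matrix.of fun i j => pd j (fun y => v y i) x

/-- Axial vector of a (skew-symmetric) `3 × 3` matrix: with `A 1 2 = -a₁`,
`A 2 0 = -a₂`, `A 0 1 = -a₃` (so `A 2 1 = a₁`, `A 0 2 = a₂`, `A 1 0 = a₃`). -/
def axl (A : Matrix (Fin 3) (Fin 3) ℝ) : Fin 3 → ℝ :=
  ![A 2 1, A 0 2, A 1 0]

/-- The skew-symmetric matrix `anti a` characterized by `(anti a) ⬝ v = a × v`. -/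
def antiM (a : Fin 3 → ℝ) : Matrix (Fin 3) (Fin 3) ℝ :=
  !![0, -a 2, a 1; a 2, 0, -a 0; -a 1, a 0, 0]

/-- Symmetric part of a matrix. -/
noncomputable def symM (X : Matrix (Fin 3) (Fin 3) ℝ) : Matrix (Fin 3) (Fin 3) ℝ :=
  (1 / 2 : ℝ) • (X + Xᵀ)

/-- Skew-symmetric part of a matrix. -/
noncomputable def skewM (X : Matrix (Fin 3) (Fin 3) ℝ) : Matrix (Fin 3) (Fin 3) ℝ :=
  (1 / 2 : ℝ) • (X - Xᵀ)

/-- Deviatoric (trace-free) part of a matrix. -/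
noncomputable def devM (X : Matrix (Fin 3) (Fin 3) ℝ) : Matrix (Fin 3) (Fin 3) ℝ :=
  X - (Matrix.trace X / 3) • (1 : Matrix (Fin 3) (Fin 3) ℝ)

/-- Frobenius inner product `⟨X, Y⟩ = tr (X Yᵀ)`. -/
noncomputable def minner (X Y : Matrix (Fin 3) (Fin 3) ℝ) : ℝ :=
  Matrix.trace (X * Yᵀ)

/-- Squared Frobenius norm. -/
noncomputable def mnormSq (X : Matrix (Fin 3) (Fin 3) ℝ) : ℝ :=
  minner X X

/-- Squared Euclidean norm of a vector in `ℝ³`. -/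
def vnormSq (v : Fin 3 → ℝ) : ℝ :=
  ∑ i, (v i) ^ 2

/-- Nye's formula (first form). -/
theorem nye_formula_first
    (A : (Fin 3 → ℝ) → Matrix (Fin 3) (Fin 3) ℝ)
    (hA_skew : ∀ x, (A x)ᵀ = -(A x))
    (hA_diff : ∀ i j, ContDiff ℝ 1 (fun y => A y i j)) :
    ∀ x : Fin 3 → ℝ,
      -(mCurl A x) =
        (jac (fun y => axl (A y)) x)ᵀ -
          Matrix.trace ((jac (fun y => axl (A y)) x)ᵀ) • (1 : Matrix (Fin 3) (Fin 3) ℝ) := by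
  intro x
  have hp : ∀ (k i j : Fin 3), pd k (fun y => A y j i) x = - pd k (fun y => A y i j) x := by
    intro k i j
    have hsk : (fun y => A y j i) = (fun y => -(A y i j)) := by
      funext y
      have := congrFun (congrFun (hA_skew y) i) j
      simpa [Matrix.transpose_apply] using this
    rw [hsk]
    simp [pd, fderiv_neg]
  have h12 : ∀ k, pd k (fun y => A y 1 2) x = - pd k (fun y => A y 2 1) x := fun k => hp k 2 1
  have h20 : ∀ k, pd k (fun y => A y 2 0) x = - pd k (fun y => A y 0 2) x := fun k => hp k 0 2
  have h01 : ∀ k, pd k (fun y => A y 0 1) x = - pd k (fun y => A y 1 0) x := fun k => hp k 1 0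
  have hd : ∀ (k i : Fin 3), pd k (fun y => A y i i) x = 0 := by
    intro k i; have := hp k i i; linarith
  ext i j
  fin_cases i <;> fin_cases j <;>
    simp [mCurl, vcurl, jac, axl, Matrix.trace, Fin.sum_univ_three, Matrix.one_apply,
      h12, h20, h01, hd, Matrix.sub_apply, Matrix.smul_apply, Matrix.neg_apply] <;>
    ring
end

section
/- Nye's formula (second form, Nye's curvature tensor): if A : ℝ³ → so(3) is a continuously differentiable skew-symmetric matrix field, then at every point ∇(axl A) = −(Curl A)ᵀ + (1/2)·tr((Curl A)ᵀ)·𝟙, where ∇(axl A) denotes the Jacobian matrix of the vector field axl A and 𝟙 is the 3×3 identity matrix. -/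
open Matrix

/-- Nye's formula (second form, Nye's curvature tensor). -/
theorem nye_formula_second
    (A : (Fin 3 → ℝ) → Matrix (Fin 3) (Fin 3) ℝ)
    (hA_skew : ∀ x, (A x)ᵀ = -(A x))
    (hA_diff : ∀ i j, ContDiff ℝ 1 (fun y => A y i j)) :
    ∀ x : Fin 3 → ℝ,
      jac (fun y => axl (A y)) x =
        -(mCurl A x)ᵀ +
          (1 / 2 : ℝ) • (Matrix.trace ((mCurl A x)ᵀ) • (1 : Matrix (Fin 3) (Fin 3) ℝ)) := by
  intro x
  have hskew : ∀ y (i j : Fin 3), A y i j = -A y j i := by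
    intro y i j
    have := congrFun (congrFun (hA_skew y) j) i
    simp only [Matrix.transpose_apply, Matrix.neg_apply] at this
    linarith
  have pneg : ∀ (i j k : Fin 3), pd k (fun y => A y i j) x = -pd k (fun y => A y j i) x := by
    intro i j k
    have h : (fun y => A y i j) = fun y => -(A y j i) := funext fun y => hskew y i j
    simp only [pd, h, fderiv_neg]
    simp
  have pdiag : ∀ (i k : Fin 3), pd k (fun y => A y i i) x = 0 := by
    intro i k
    have h : (fun y => A y i i) = fun _ => 0 := funext fun y => by
      have := hskew y i i; linarith
    simp [pd, h]
  have p12 := pneg 1 2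
  have p20 := pneg 2 0
  have p01 := pneg 0 1
  ext i j
  fin_cases i <;> fin_cases j <;>
    simp [jac, mCurl, vcurl, axl, Matrix.trace, Fin.sum_univ_three, Matrix.one_apply,
      Matrix.diag, p12, p20, p01, pdiag] <;> ring
end

section
/- For every twice continuously differentiable matrix field S : ℝ³ → Sym(3) taking values in the symmetric 3×3 matrices, the matrix Curl((Curl S)ᵀ) is symmetric at every point of ℝ³. -/
open Matrix

/-! Writing `Aₖ = antiM eₖ`, the row-wise curl is `Curl P = ∑ₖ ∂ₖP · Aₖᵀ`. For symmetric `S` this gives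
`(Curl S)ᵀ = ∑ₖ Aₖ · ∂ₖS` and hence `Curl((Curl S)ᵀ) = ∑ₖ ∑ₘ Aₖ · ∂ₘ∂ₖS · Aₘᵀ`. Its transpose is
`∑ₖ ∑ₘ Aₘ · (∂ₘ∂ₖS)ᵀ · Aₖᵀ`, and `(∂ₘ∂ₖS)ᵀ = ∂ₖ∂ₘS` by symmetry of `S` and of second derivatives,
so the transpose is the same double sum with `k` and `m` exchanged. -/

noncomputable def mpd (k : Fin 3) (P : (Fin 3 → ℝ) → Matrix (Fin 3) (Fin 3) ℝ) (x : Fin 3 → ℝ) :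
    Matrix (Fin 3) (Fin 3) ℝ :=
  Matrix.of fun i j => pd k (fun y => P y i j) x

lemma pd_sum {ι : Type*} (s : Finset ι) (f : ι → (Fin 3 → ℝ) → ℝ) (k : Fin 3) {x : Fin 3 → ℝ}
    (hf : ∀ i ∈ s, DifferentiableAt ℝ (f i) x) :
    pd k (fun y => ∑ i ∈ s, f i y) x = ∑ i ∈ s, pd k (f i) x := by
  simp [pd, fderiv_fun_sum hf]

lemma pd_const_mul (c : ℝ) (f : (Fin 3 → ℝ) → ℝ) (k : Fin 3) {x : Fin 3 → ℝ}
    (hf : DifferentiableAt ℝ f x) :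
    pd k (fun y => c * f y) x = c * pd k f x := by
  simp [pd, fderiv_const_mul hf]

lemma contDiff_pd {f : (Fin 3 → ℝ) → ℝ} {m n : WithTop ℕ∞} (hf : ContDiff ℝ n f)
    (hmn : m + 1 ≤ n) (k : Fin 3) : ContDiff ℝ m (pd k f) :=
  (ContinuousLinearMap.apply ℝ ℝ (Pi.single k 1 : Fin 3 → ℝ)).contDiff.comp
    (hf.fderiv_right hmn)

lemma pd_pd_eq_fderiv_fderiv {f : (Fin 3 → ℝ) → ℝ} {x : Fin 3 → ℝ}
    (hf : DifferentiableAt ℝ (fderiv ℝ f) x) (a b : Fin 3) :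
    pd a (pd b f) x = fderiv ℝ (fderiv ℝ f) x (Pi.single a 1) (Pi.single b 1) := by
  change fderiv ℝ (fun y => fderiv ℝ f y (Pi.single b 1)) x (Pi.single a 1) = _
  rw [fderiv_clm_apply hf (differentiableAt_const _)]
  simp

lemma pd_pd_comm {f : (Fin 3 → ℝ) → ℝ} {x : Fin 3 → ℝ} (hf : ContDiffAt ℝ 2 f x) (a b : Fin 3) :
    pd a (pd b f) x = pd b (pd a f) x := by
  have hdiff : DifferentiableAt ℝ (fderiv ℝ f) x :=
    (hf.fderiv_right (m := 1) le_rfl).differentiableAt one_ne_zero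
  rw [pd_pd_eq_fderiv_fderiv hdiff, pd_pd_eq_fderiv_fderiv hdiff,
    (hf.isSymmSndFDerivAt (by simp)).eq]

lemma mpd_sum_mul {ι : Type*} (s : Finset ι) (C : ι → Matrix (Fin 3) (Fin 3) ℝ)
    (Q : ι → (Fin 3 → ℝ) → Matrix (Fin 3) (Fin 3) ℝ) (k : Fin 3) {x : Fin 3 → ℝ}
    (hQ : ∀ l ∈ s, ∀ i j, DifferentiableAt ℝ (fun y => Q l y i j) x) :
    mpd k (fun y => ∑ l ∈ s, C l * Q l y) x = ∑ l ∈ s, C l * mpd k (Q l) x := by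
  ext i j
  simp only [mpd, Matrix.of_apply, Matrix.sum_apply, Matrix.mul_apply]
  rw [pd_sum _ _ _ fun l hl => DifferentiableAt.fun_sum fun a _ =>
    (hQ l hl a j).const_mul _]
  refine Finset.sum_congr rfl fun l hl => ?_
  rw [pd_sum _ _ _ fun a _ => (hQ l hl a j).const_mul _]
  exact Finset.sum_congr rfl fun a _ => pd_const_mul _ _ _ (hQ l hl a j)

lemma mCurl_eq_sum (P : (Fin 3 → ℝ) → Matrix (Fin 3) (Fin 3) ℝ) (x : Fin 3 → ℝ) :
    mCurl P x = ∑ k, mpd k P x * (antiM (Pi.single k 1))ᵀ := by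
  ext i j
  fin_cases j <;> simp [mCurl, vcurl, mpd, antiM, Matrix.mul_apply, Fin.sum_univ_three,
    Matrix.sum_apply] <;> ring

lemma mpd_transpose (k : Fin 3) (P : (Fin 3 → ℝ) → Matrix (Fin 3) (Fin 3) ℝ) (x : Fin 3 → ℝ) :
    (mpd k P x)ᵀ = mpd k (fun y => (P y)ᵀ) x :=
  rfl

lemma mpd_mpd_transpose_of_symm {S : (Fin 3 → ℝ) → Matrix (Fin 3) (Fin 3) ℝ}
    (hS_sym : ∀ x, (S x)ᵀ = S x) {x : Fin 3 → ℝ}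
    (hS_diff : ∀ i j, ContDiffAt ℝ 2 (fun y => S y i j) x) (a b : Fin 3) :
    (mpd a (mpd b S) x)ᵀ = mpd b (mpd a S) x := by
  have hS_entry : ∀ i j, (fun y => S y j i) = fun y => S y i j :=
    fun i j => funext fun y => congrFun (congrFun (hS_sym y) i) j
  ext i j
  simp only [mpd, Matrix.transpose_apply, Matrix.of_apply]
  rw [hS_entry, pd_pd_comm (hS_diff i j)]

/-- For a symmetric matrix field S, the matrix Curl((Curl S)ᵀ) is symmetric. -/
theorem curl_curl_transpose_sym
    (S : (Fin 3 → ℝ) → Matrix (Fin 3) (Fin 3) ℝ)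
    (hS_sym : ∀ x, (S x)ᵀ = S x)
    (hS_diff : ∀ i j, ContDiff ℝ 2 (fun y => S y i j)) :
    ∀ x : Fin 3 → ℝ,
      (mCurl (fun y => (mCurl S y)ᵀ) x)ᵀ = mCurl (fun y => (mCurl S y)ᵀ) x := by
  intro x
  have hcurlT : (fun y => (mCurl S y)ᵀ) = fun y => ∑ k, antiM (Pi.single k 1) * mpd k S y := by
    funext y
    simp only [mCurl_eq_sum, Matrix.transpose_sum, Matrix.transpose_mul, mpd_transpose, hS_sym,
      Matrix.transpose_transpose]
  have hdiff : ∀ k ∈ Finset.univ, ∀ i j, DifferentiableAt ℝ (fun y => mpd k S y i j) x :=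
    fun k _ i j => (contDiff_pd (hS_diff i j) (m := 1) le_rfl k).differentiable one_ne_zero x
  rw [hcurlT, mCurl_eq_sum]
  simp only [mpd_sum_mul _ _ _ _ hdiff, Matrix.transpose_sum, Matrix.transpose_mul,
    Finset.sum_mul, Matrix.mul_assoc, Matrix.transpose_transpose,
    mpd_mpd_transpose_of_symm hS_sym fun i j => (hS_diff i j).contDiffAt]
  rw [Finset.sum_comm]
end

section
/- For every continuously differentiable matrix field A : ℝ³ → so(3) taking values in the skew-symmetric 3×3 matrices and all real numbers α₁, α₂, α₃, the following pointwise identity holds: α₁ dev sym Curl A + α₂ skew Curl A + α₃ tr(Curl A)·𝟙 = −α₁ dev sym(∇(axl A)) + α₂ skew(∇(axl A)) + 2α₃ tr(∇(axl A))·𝟙, where ∇(axl A) is the Jacobian matrix of the vector field axl A. -/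
open Matrix

/- Idea: a skew-symmetric field is `A = anti a` with `a = axl A`, and differentiating the rows of
`anti a` gives the classical formula `Curl (anti a) = tr (∇a) 𝟙 - (∇a)ᵀ`. Applying `dev sym`, `skew`
and `tr` to `t 𝟙 - Jᵀ` flips the sign of `dev sym J`, keeps `skew J` and turns `tr J` into
`3t - tr J`; at `t = tr J` this is the claimed identity. -/

theorem pd_neg (j : Fin 3) (f : (Fin 3 → ℝ) → ℝ) (x : Fin 3 → ℝ) :
    pd j (fun y => -f y) x = -pd j f x := by
  simp [pd, fderiv_fun_neg]

theorem pd_const (j : Fin 3) (c : ℝ) (x : Fin 3 → ℝ) : pd j (fun _ => c) x = 0 := by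
  simp [pd]

theorem antiM_axl {X : Matrix (Fin 3) (Fin 3) ℝ} (hX : Xᵀ = -X) : antiM (axl X) = X := by
  have hX' : ∀ i j, X j i = -X i j := fun i j => by simpa using congrFun (congrFun hX i) j
  have hdiag : ∀ i, X i i = 0 := fun i => by linarith [hX' i i]
  ext i j
  fin_cases i <;> fin_cases j <;> simp [antiM, axl, hdiag, hX' 1 2, hX' 2 0, hX' 0 1]

theorem mCurl_antiM (a : (Fin 3 → ℝ) → Fin 3 → ℝ) (x : Fin 3 → ℝ) :
    mCurl (fun y => antiM (a y)) x = trace (jac a x) • 1 - (jac a x)ᵀ := by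
  ext i j
  fin_cases i <;> fin_cases j <;>
    simp [mCurl, vcurl, jac, antiM, trace, Fin.sum_univ_three, pd_neg, pd_const] <;> ring

theorem devM_symM_smul_one_sub_transpose (t : ℝ) (J : Matrix (Fin 3) (Fin 3) ℝ) :
    devM (symM (t • 1 - Jᵀ)) = -devM (symM J) := by
  ext i j
  fin_cases i <;> fin_cases j <;>
    simp [devM, symM, trace, Fin.sum_univ_three] <;> ring

theorem skewM_smul_one_sub_transpose (t : ℝ) (J : Matrix (Fin 3) (Fin 3) ℝ) :
    skewM (t • 1 - Jᵀ) = skewM J := by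
  ext i j
  fin_cases i <;> fin_cases j <;> simp [skewM]

theorem trace_smul_one_sub_transpose (t : ℝ) (J : Matrix (Fin 3) (Fin 3) ℝ) :
    trace (t • 1 - Jᵀ) = 3 * t - trace J := by
  rw [trace_sub, trace_smul, trace_one, trace_transpose, Fintype.card_fin, smul_eq_mul]
  push_cast
  ring

theorem curl_skew_curvature_identity_general
    (A : (Fin 3 → ℝ) → Matrix (Fin 3) (Fin 3) ℝ)
    (hA_skew : ∀ x, (A x)ᵀ = -(A x))
    (α₁ α₂ α₃ : ℝ) :
    ∀ x : Fin 3 → ℝ,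
      α₁ • devM (symM (mCurl A x)) + α₂ • skewM (mCurl A x) +
          (α₃ * Matrix.trace (mCurl A x)) • (1 : Matrix (Fin 3) (Fin 3) ℝ) =
        (-α₁) • devM (symM (jac (fun y => axl (A y)) x)) +
          α₂ • skewM (jac (fun y => axl (A y)) x) +
          (2 * α₃ * Matrix.trace (jac (fun y => axl (A y)) x)) •
            (1 : Matrix (Fin 3) (Fin 3) ℝ) := by
  intro x
  have hA : mCurl A x = mCurl (fun y => antiM (axl (A y))) x := by
    simp only [antiM_axl (hA_skew _)]
  rw [hA, mCurl_antiM, devM_symM_smul_one_sub_transpose, skewM_smul_one_sub_transpose,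
    trace_smul_one_sub_transpose]
  module

/-- For a skew-symmetric matrix field A:
α₁ dev sym Curl A + α₂ skew Curl A + α₃ tr(Curl A)·𝟙
= −α₁ dev sym ∇(axl A) + α₂ skew ∇(axl A) + 2α₃ tr(∇(axl A))·𝟙. -/
theorem curl_skew_curvature_identity
    (A : (Fin 3 → ℝ) → Matrix (Fin 3) (Fin 3) ℝ)
    (hA_skew : ∀ x, (A x)ᵀ = -(A x))
    (hA_diff : ∀ i j, ContDiff ℝ 1 (fun y => A y i j))
    (α₁ α₂ α₃ : ℝ) :
    ∀ x : Fin 3 → ℝ,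
      α₁ • devM (symM (mCurl A x)) + α₂ • skewM (mCurl A x) +
          (α₃ * Matrix.trace (mCurl A x)) • (1 : Matrix (Fin 3) (Fin 3) ℝ) =
        (-α₁) • devM (symM (jac (fun y => axl (A y)) x)) +
          α₂ • skewM (jac (fun y => axl (A y)) x) +
          (2 * α₃ * Matrix.trace (jac (fun y => axl (A y)) x)) •
            (1 : Matrix (Fin 3) (Fin 3) ℝ) :=
  curl_skew_curvature_identity_general A hA_skew α₁ α₂ α₃
end
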